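/- arXiv:2409.00534 — 3 statements merged into one kernel-verified Lean document; each statement's English description precedes it below -/
import Mathlib

section
/- Every connected r-regular graph admitting a proper r-edge-coloring has at most r solitary equivalence classes. -/
/-- The underlying simple graph of a multigraph given by `ends`. -/
def toSimple {V E : Type} (ends : E → Sym2 V) : SimpleGraph V where
  Adj u w := u ≠ w ∧ ∃ e, ends e = s(u, w)
  symm := by
    constructor
    rintro u w ⟨hne, e, he⟩
    exact ⟨hne.symm, e, by rw [he]; exact Sym2.eq_swap⟩
  loopless := by constructor; rintro u ⟨hne, -⟩; exact hne rfl

/-- A perfect matching: every vertex is incident with exactly one edge of `M`. -/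
def IsPM {V E : Type} (ends : E → Sym2 V) (M : Set E) : Prop :=
  ∀ v : V, ∃! e, e ∈ M ∧ v ∈ ends e

/-- A matching covered graph: connected, of order at least two, and every edge
lies in some perfect matching. -/
def IsMC {V E : Type} (ends : E → Sym2 V) : Prop :=
  (toSimple ends).Connected ∧ 2 ≤ Nat.card V ∧ ∀ e, ∃ M, IsPM ends M ∧ e ∈ M

/-- Edge `e` depends on edge `f`: every perfect matching containing `e` also
contains `f`. -/
def Dep {V E : Type} (ends : E → Sym2 V) (e f : E) : Prop :=
  ∀ M, IsPM ends M → e ∈ M → f ∈ M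

/-- Edges `e` and `f` are mutually dependent. -/
def MutDep {V E : Type} (ends : E → Sym2 V) (e f : E) : Prop :=
  Dep ends e f ∧ Dep ends f e

/-- A solitary edge: it lies in exactly one perfect matching. -/
def Solitary {V E : Type} (ends : E → Sym2 V) (e : E) : Prop :=
  ∃! M, IsPM ends M ∧ e ∈ M

/-- Degree of a vertex (counting multiplicities). -/
noncomputable def deg {V E : Type} (ends : E → Sym2 V) (v : V) : ℕ :=
  {e | v ∈ ends e}.ncard

/-- A proper edge coloring: edges sharing a vertex get different colors. -/
def Proper {V E : Type} (ends : E → Sym2 V) {r : ℕ} (c : E → Fin r) : Prop :=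
  ∀ e f, e ≠ f → (∃ v, v ∈ ends e ∧ v ∈ ends f) → c e ≠ c f

/- A solitary edge lies in a unique perfect matching, so it depends on every edge of that matching.
When the color classes of an edge coloring are perfect matchings, two solitary edges of the same
color therefore lie in the same matching and are mutually dependent, so each color hosts at most
one solitary class. In an `r`-regular graph a proper `r`-edge-coloring uses every color at every
vertex, hence its color classes are perfect matchings. -/

section Dependence

variable {V E : Type} {ends : E → Sym2 V} {e f g : E}

theorem Dep.trans (hef : Dep ends e f) (hfg : Dep ends f g) : Dep ends e g :=
  fun M hM he => hfg M hM (hef M hM he)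

theorem MutDep.trans (hef : MutDep ends e f) (hfg : MutDep ends f g) : MutDep ends e g :=
  ⟨hef.1.trans hfg.1, hfg.2.trans hef.2⟩

theorem Solitary.dep_of_mem {M : Set E} (he : Solitary ends e) (hM : IsPM ends M) (heM : e ∈ M)
    (hfM : f ∈ M) : Dep ends e f := by
  intro N hN heN
  rwa [he.unique ⟨hN, heN⟩ ⟨hM, heM⟩]

theorem Solitary.mutDep_of_mem {M : Set E} (he : Solitary ends e) (hf : Solitary ends f)
    (hM : IsPM ends M) (heM : e ∈ M) (hfM : f ∈ M) : MutDep ends e f :=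
  ⟨he.dep_of_mem hM heM hfM, hf.dep_of_mem hM hfM heM⟩

end Dependence

section Coloring

variable {V E : Type} {ends : E → Sym2 V} {r : ℕ} {c : E → Fin r}

theorem Proper.injOn_incident (hc : Proper ends c) (v : V) : Set.InjOn c {e | v ∈ ends e} := by
  intro e he f hf hcef
  by_contra hne
  exact hc e f hne ⟨v, he, hf⟩ hcef

theorem Proper.isPM_colorClass (hreg : ∀ v, deg ends v = r) (hc : Proper ends c) (i : Fin r) :
    IsPM ends {f | c f = i} := by
  intro v
  have hcard : {e | v ∈ ends e}.ncard = r := hreg v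
  have hsurj : c '' {e | v ∈ ends e} = Set.univ := by
    refine Set.eq_of_subset_of_ncard_le (Set.subset_univ _) ?_
    rw [(hc.injOn_incident v).ncard_image, hcard, Set.ncard_univ, Nat.card_fin]
  obtain ⟨e, hve, hce⟩ := hsurj.symm ▸ Set.mem_univ i
  refine ⟨e, ⟨hce, hve⟩, fun f ⟨hcf, hvf⟩ => ?_⟩
  by_contra hne
  exact hc f e hne ⟨v, hvf, hve⟩ (hcf.trans hce.symm)

theorem ncard_solitaryClasses_le_of_isPM_colorClass (hPM : ∀ i, IsPM ends {f | c f = i}) :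
    {S : Set E | ∃ e, Solitary ends e ∧ S = {f | MutDep ends e f}}.ncard ≤ r := by
  let classOfColor (i : Fin r) : Set E := {f | ∃ e, Solitary ends e ∧ c e = i ∧ MutDep ends e f}
  have hsub : {S : Set E | ∃ e, Solitary ends e ∧ S = {f | MutDep ends e f}} ⊆
      classOfColor '' Set.univ := by
    rintro _ ⟨e, he, rfl⟩
    refine ⟨c e, Set.mem_univ _, Set.ext fun f => ⟨?_, fun hef => ⟨e, he, rfl, hef⟩⟩⟩
    rintro ⟨e', he', hce', he'f⟩
    exact (he.mutDep_of_mem he' (hPM (c e)) rfl hce').trans he'f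
  calc _ ≤ (classOfColor '' Set.univ).ncard := Set.ncard_le_ncard hsub
    _ ≤ (Set.univ : Set (Fin r)).ncard := Set.ncard_image_le
    _ = r := by rw [Set.ncard_univ, Nat.card_fin]

end Coloring

theorem stmt9_general {V E : Type}
    (ends : E → Sym2 V) (r : ℕ)
    (hreg : ∀ v, deg ends v = r)
    (c : E → Fin r) (hc : Proper ends c) :
    {S : Set E | ∃ e, Solitary ends e ∧ S = {f | MutDep ends e f}}.ncard ≤ r :=
  ncard_solitaryClasses_le_of_isPM_colorClass (hc.isPM_colorClass hreg)

/-- Every connected `r`-regular multigraph admitting a proper `r`-edge-coloring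
has at most `r` solitary equivalence classes. -/
theorem stmt9 {V E : Type} [Fintype V] [Fintype E]
    (ends : E → Sym2 V) (r : ℕ)
    (hconn : (toSimple ends).Connected) (hreg : ∀ v, deg ends v = r)
    (c : E → Fin r) (hc : Proper ends c) :
    {S : Set E | ∃ e, Solitary ends e ∧ S = {f | MutDep ends e f}}.ncard ≤ r :=
  stmt9_general ends r hreg c hc
end

section
/- Let G be a 2-connected graph of even order with an even 2-cut C, and let G₁, G₂ be its marked C-components with marker edges e₁, e₂. Then for any perfect matching M of G, either M ∩ C = ∅ and M ∩ E(Gᵢ) is a perfect matching of Gᵢ for each i, or M ⊇ C and (M ∩ E(Gᵢ)) + eᵢ is a perfect matching of Gᵢ for each i. -/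
noncomputable section
open scoped Classical

/-- The edge cut `∂(X)`. -/
def Cut {V E : Type} (ends : E → Sym2 V) (X : Set V) : Set E :=
  {e | ∃ u ∈ X, ∃ w, w ∉ X ∧ ends e = s(u, w)}

/-- Push a vertex of `X` into the subtype `↥X` (default `a` off `X`). -/
noncomputable def restrVert {V : Type} (X : Set V) (a : ↥X) (v : V) : ↥X :=
  if h : v ∈ X then ⟨v, h⟩ else a

/-- The marked `C`-component of a multigraph on the shore `X`: its vertices are
those of `X`, its edges are the edges with both ends in `X` together with one
extra marker edge joining `a` and `b` (the ends in `X` of the two cut edges). -/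
noncomputable def markedEnds {V E : Type} (ends : E → Sym2 V) (X : Set V)
    (a b : ↥X) : ({e : E // ∀ v ∈ ends e, v ∈ X} ⊕ Unit) → Sym2 ↥X
  | Sum.inl e => (ends e.val).map (restrVert X a)
  | Sum.inr _ => s(a, b)

/-- The restriction of an edge set `M` of `G` to a marked component on shore `X`;
the marker edge is included according to `marker`. -/
def restrM {V E : Type} (ends : E → Sym2 V) (X : Set V) (M : Set E)
    (marker : Prop) : Set ({e : E // ∀ v ∈ ends e, v ∈ X} ⊕ Unit) :=
  {x | Sum.elim (fun e => e.val ∈ M) (fun _ => marker) x}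

/-- `G` is 2-connected: connected and removing any single vertex leaves it
connected. -/
def TwoConnected {V E : Type} (ends : E → Sym2 V) : Prop :=
  (toSimple ends).Connected ∧
    ∀ v : V, Set.Nonempty {w | w ≠ v} → ((toSimple ends).induce {w | w ≠ v}).Connected

/-! A perfect matching `M` covers each vertex of a finite shore `X` exactly once, so counting the
pairs (vertex of `X`, its `M`-edge) gives `|X| ≡ |M ∩ ∂X| (mod 2)`. As `X` is even, `M` contains
both or neither of the two cut edges `f`, `f'`. In the first case the marker edge of each shore
takes over the role of `f` and `f'`; in the second case `M` has no edge leaving the shore. -/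

section Cut

variable {V E : Type} {ends : E → Sym2 V} {X : Set V} {e : E}

lemma cut_compl (ends : E → Sym2 V) (X : Set V) : Cut ends Xᶜ = Cut ends X := by
  ext e
  constructor <;>
  · rintro ⟨u, hu, w, hw, hew⟩
    exact ⟨w, by simpa using hw, u, by simpa using hu, hew.trans Sym2.eq_swap⟩

lemma mem_cut_iff_of_ends_eq {x y : V} (h : ends e = s(x, y)) :
    e ∈ Cut ends X ↔ (x ∈ X ↔ y ∉ X) := by
  simp only [Cut, Set.mem_ofPred_eq, h, Sym2.eq_iff]
  constructor
  · rintro ⟨u, hu, w, hw, ⟨rfl, rfl⟩ | ⟨rfl, rfl⟩⟩ <;> tauto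
  · intro hxy
    by_cases hx : x ∈ X
    · exact ⟨x, hx, y, hxy.1 hx, .inl ⟨rfl, rfl⟩⟩
    · exact ⟨y, not_not.1 (mt hxy.2 hx), x, hx, .inr ⟨rfl, rfl⟩⟩

lemma forall_mem_of_notMem_cut (he : e ∉ Cut ends X) {v : V} (hv : v ∈ X)
    (hve : v ∈ ends e) : ∀ w ∈ ends e, w ∈ X := by
  obtain ⟨w, hw⟩ := Sym2.mem_iff_exists.1 hve
  have hwX : w ∈ X := by_contra fun hwX ↦ he ⟨v, hv, w, hwX, hw⟩
  intro x hx
  rcases Sym2.mem_iff.1 (hw ▸ hx) with rfl | rfl <;> assumption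

lemma not_forall_mem_of_mem_cut (he : e ∈ Cut ends X) : ¬ ∀ w ∈ ends e, w ∈ X := by
  obtain ⟨u, -, w, hw, hew⟩ := he
  exact fun h ↦ hw (h w (hew ▸ Sym2.mem_mk_right u w))

lemma eq_of_mem_cut (he : e ∈ Cut ends X) {v w : V} (hv : v ∈ ends e) (hw : w ∈ ends e)
    (hvX : v ∈ X) (hwX : w ∈ X) : v = w := by
  obtain ⟨u, -, x, hx, hux⟩ := he
  rw [hux, Sym2.mem_iff] at hv hw
  rcases hv with rfl | rfl <;> rcases hw with rfl | rfl <;> tauto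

lemma natCast_card_filter_mem_ends (hloop : ¬ (ends e).IsDiag) (s : Finset V) :
    (({v ∈ s | v ∈ ends e} : Finset V).card : ZMod 2) = if e ∈ Cut ends s then 1 else 0 := by
  induction hxy : ends e using Sym2.ind with
  | h x y =>
    have hne : x ≠ y := by rwa [hxy, Sym2.mk_isDiag_iff] at hloop
    rw [mem_cut_iff_of_ends_eq hxy]
    have hends : {v ∈ s | v ∈ s(x, y)} = ({x, y} : Finset V).filter (· ∈ s) := by
      ext v
      simp only [Finset.mem_filter, Sym2.mem_iff, Finset.mem_insert, Finset.mem_singleton]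
      tauto
    rw [hends, Finset.filter_insert, Finset.filter_singleton]
    by_cases hx : x ∈ s <;> by_cases hy : y ∈ s <;>
      simp [hx, hy, hne, Finset.card_insert_of_notMem, CharTwo.two_eq_zero]

end Cut

section PerfectMatching

variable {V E : Type} {ends : E → Sym2 V} {M : Set E}

lemma IsPM.natCast_ncard_inter_cut (hloop : ∀ e, ¬ (ends e).IsDiag) (hM : IsPM ends M)
    {X : Set V} (hX : X.Finite) : ((M ∩ Cut ends X).ncard : ZMod 2) = X.ncard := by
  choose m hm hmuniq using hM
  set s := hX.toFinset
  have hfiber : ∀ e ∈ s.image m, {v ∈ s | m v = e} = {v ∈ s | v ∈ ends e} := by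
    intro e he
    obtain ⟨w, -, rfl⟩ := Finset.mem_image.1 he
    exact Finset.filter_congr fun v _ ↦
      ⟨fun h ↦ h ▸ (hm v).2, fun hv ↦ (hmuniq v _ ⟨(hm w).1, hv⟩).symm⟩
  have hcut : M ∩ Cut ends X = ↑{e ∈ s.image m | e ∈ Cut ends s} := by
    ext e
    simp only [Set.mem_inter_iff, Finset.coe_filter, Finset.mem_image, Set.mem_ofPred_eq, s,
      Set.Finite.coe_toFinset, Set.Finite.mem_toFinset]
    constructor
    · rintro ⟨heM, he⟩
      obtain ⟨u, hu, w, hw, hew⟩ := he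
      exact ⟨⟨u, hu, (hmuniq u e ⟨heM, hew ▸ Sym2.mem_mk_left u w⟩).symm⟩, ⟨u, hu, w, hw, hew⟩⟩
    · rintro ⟨⟨u, -, rfl⟩, he⟩
      exact ⟨(hm u).1, he⟩
  rw [hcut, Set.ncard_coe_finset, ← hX.coe_toFinset, Set.ncard_coe_finset,
    Finset.card_eq_sum_card_image m s, Nat.cast_sum, Finset.sum_congr rfl fun e he ↦ by
      rw [hfiber e he, natCast_card_filter_mem_ends (hloop e)],
    Finset.sum_boole]

end PerfectMatching

section MarkedComponent

variable {V E : Type} {ends : E → Sym2 V} {X : Set V} {a b : ↥X} {v : V} {hv : v ∈ X}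

lemma mem_markedEnds_inl_iff {e : {e : E // ∀ v ∈ ends e, v ∈ X}} :
    (⟨v, hv⟩ : ↥X) ∈ markedEnds ends X a b (.inl e) ↔ v ∈ ends e := by
  refine ⟨fun h ↦ ?_, fun h ↦ Sym2.mem_map.2 ⟨v, h, by rw [restrVert, dif_pos hv]⟩⟩
  obtain ⟨y, hy, hyv⟩ := Sym2.mem_map.1 h
  rw [restrVert, dif_pos (e.2 y hy)] at hyv
  obtain rfl : y = v := congrArg Subtype.val hyv
  exact hy

lemma mem_markedEnds_inr_iff :
    (⟨v, hv⟩ : ↥X) ∈ markedEnds ends X a b (.inr ()) ↔ v = a ∨ v = b := by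
  simp [markedEnds, Subtype.ext_iff]

lemma IsPM.isPM_restrM {M : Set E} (hM : IsPM ends M) (P : Prop)
    (hcut : ∀ v ∈ X, ∀ e ∈ M, v ∈ ends e → (e ∈ Cut ends X ↔ P ∧ (v = a ∨ v = b))) :
    IsPM (markedEnds ends X a b) (restrM ends X M P) := by
  rintro ⟨v, hv⟩
  obtain ⟨e, ⟨heM, hve⟩, huniq⟩ := hM v
  have inl_unique (e' : {e : E // ∀ v ∈ ends e, v ∈ X}) (he'M : e'.1 ∈ M)
      (hve' : (⟨v, hv⟩ : ↥X) ∈ markedEnds ends X a b (.inl e')) : e'.1 = e :=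
    huniq e' ⟨he'M, mem_markedEnds_inl_iff.1 hve'⟩
  by_cases he : e ∈ Cut ends X
  · obtain ⟨hP, hab⟩ := (hcut v hv e heM hve).1 he
    refine ⟨.inr (), ⟨hP, mem_markedEnds_inr_iff.2 hab⟩, ?_⟩
    rintro (e' | ⟨⟩) ⟨he'M, hve'⟩
    · exact absurd e'.2 (inl_unique e' he'M hve' ▸ not_forall_mem_of_mem_cut he)
    · rfl
  · have hinner := forall_mem_of_notMem_cut he hv hve
    refine ⟨.inl ⟨e, hinner⟩, ⟨heM, mem_markedEnds_inl_iff.2 hve⟩, ?_⟩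
    rintro (e' | ⟨⟩) ⟨he'M, hve'⟩
    · exact congrArg Sum.inl (Subtype.ext (inl_unique e' he'M hve'))
    · exact absurd ((hcut v hv e heM hve).2 ⟨he'M, mem_markedEnds_inr_iff.1 hve'⟩) he

lemma IsPM.isPM_restrM_of_cut_eq_pair {M : Set E} (hM : IsPM ends M) {f f' : E}
    (hC : Cut ends X = {f, f'}) (hMC : f ∈ M ↔ f' ∈ M) (ha : a.1 ∈ ends f)
    (hb : b.1 ∈ ends f') : IsPM (markedEnds ends X a b) (restrM ends X M (f ∈ M)) := by
  have hf : f ∈ Cut ends X := hC ▸ Set.mem_insert f {f'}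
  have hf' : f' ∈ Cut ends X := hC ▸ Set.mem_insert_of_mem f rfl
  refine hM.isPM_restrM _ fun v hv e heM hve ↦ ⟨fun he ↦ ?_, ?_⟩
  · rcases hC ▸ he with rfl | rfl
    · exact ⟨heM, .inl (eq_of_mem_cut hf hve ha hv a.2)⟩
    · exact ⟨hMC.2 heM, .inr (eq_of_mem_cut hf' hve hb hv b.2)⟩
  · rintro ⟨hfM, rfl | rfl⟩
    · exact (hM a).unique ⟨heM, hve⟩ ⟨hfM, ha⟩ ▸ hf
    · exact (hM b).unique ⟨heM, hve⟩ ⟨hMC.1 hfM, hb⟩ ▸ hf'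

end MarkedComponent

lemma mem_iff_mem_of_even_ncard_inter_pair {α : Type*} {M : Set α} {x y : α}
    (h : Even (M ∩ {x, y}).ncard) : x ∈ M ↔ y ∈ M := by
  by_cases hx : x ∈ M <;> by_cases hy : y ∈ M <;>
    simp_all [Set.inter_insert_of_mem, Set.inter_insert_of_notMem]

theorem stmt12_general {V E : Type} [Fintype V]
    (ends : E → Sym2 V) (hloop : ∀ e, ¬ (ends e).IsDiag)
    (X : Set V) (f f' : E) (hC : Cut ends X = {f, f'})
    (hXeven : Even X.ncard)
    (u₁ u₂ v₁ v₂ : V) (hu₁ : u₁ ∈ X) (hu₂ : u₂ ∉ X) (hv₁ : v₁ ∈ X) (hv₂ : v₂ ∉ X)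
    (hf : ends f = s(u₁, u₂)) (hf' : ends f' = s(v₁, v₂))
    (M : Set E) (hM : IsPM ends M) :
    (f ∉ M ∧ f' ∉ M ∧
        IsPM (markedEnds ends X ⟨u₁, hu₁⟩ ⟨v₁, hv₁⟩) (restrM ends X M False) ∧
        IsPM (markedEnds ends Xᶜ ⟨u₂, hu₂⟩ ⟨v₂, hv₂⟩) (restrM ends Xᶜ M False)) ∨
      (f ∈ M ∧ f' ∈ M ∧
        IsPM (markedEnds ends X ⟨u₁, hu₁⟩ ⟨v₁, hv₁⟩) (restrM ends X M True) ∧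
        IsPM (markedEnds ends Xᶜ ⟨u₂, hu₂⟩ ⟨v₂, hv₂⟩) (restrM ends Xᶜ M True)) := by
  have hMC : f ∈ M ↔ f' ∈ M := by
    refine mem_iff_mem_of_even_ncard_inter_pair (hC ▸ ZMod.natCast_eq_zero_iff_even.1 ?_)
    rw [hM.natCast_ncard_inter_cut hloop X.toFinite, ZMod.natCast_eq_zero_iff_even.2 hXeven]
  have hX := hM.isPM_restrM_of_cut_eq_pair (a := ⟨u₁, hu₁⟩) (b := ⟨v₁, hv₁⟩) hC hMC
    (hf ▸ Sym2.mem_mk_left _ _) (hf' ▸ Sym2.mem_mk_left _ _)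
  have hXc := hM.isPM_restrM_of_cut_eq_pair (a := ⟨u₂, hu₂⟩) (b := ⟨v₂, hv₂⟩)
    ((cut_compl ends X).trans hC) hMC (hf ▸ Sym2.mem_mk_right _ _) (hf' ▸ Sym2.mem_mk_right _ _)
  by_cases hfM : f ∈ M
  · rw [eq_true hfM] at hX hXc
    exact .inr ⟨hfM, hMC.1 hfM, hX, hXc⟩
  · rw [eq_false hfM] at hX hXc
    exact .inl ⟨hfM, mt hMC.2 hfM, hX, hXc⟩

/-- Let `G` be a 2-connected loopless multigraph of even order with an even
2-cut `C = {f, f'} = ∂(X)`, and let `G₁`, `G₂` be its marked `C`-components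
with marker edges `e₁`, `e₂`. Then for any perfect matching `M` of `G`, either
`M ∩ C = ∅` and `M ∩ E(Gᵢ)` is a perfect matching of `Gᵢ` for each `i`, or
`C ⊆ M` and `(M ∩ E(Gᵢ)) + eᵢ` is a perfect matching of `Gᵢ` for each `i`. -/
theorem stmt12 {V E : Type} [Fintype V] [Fintype E]
    (ends : E → Sym2 V) (hloop : ∀ e, ¬ (ends e).IsDiag)
    (h2c : TwoConnected ends) (heven : Even (Fintype.card V))
    (X : Set V) (f f' : E) (hff : f ≠ f') (hC : Cut ends X = {f, f'})
    (hXeven : Even X.ncard)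
    (u₁ u₂ v₁ v₂ : V) (hu₁ : u₁ ∈ X) (hu₂ : u₂ ∉ X) (hv₁ : v₁ ∈ X) (hv₂ : v₂ ∉ X)
    (hf : ends f = s(u₁, u₂)) (hf' : ends f' = s(v₁, v₂))
    (M : Set E) (hM : IsPM ends M) :
    (f ∉ M ∧ f' ∉ M ∧
        IsPM (markedEnds ends X ⟨u₁, hu₁⟩ ⟨v₁, hv₁⟩) (restrM ends X M False) ∧
        IsPM (markedEnds ends Xᶜ ⟨u₂, hu₂⟩ ⟨v₂, hv₂⟩) (restrM ends Xᶜ M False)) ∨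
      (f ∈ M ∧ f' ∈ M ∧
        IsPM (markedEnds ends X ⟨u₁, hu₁⟩ ⟨v₁, hv₁⟩) (restrM ends X M True) ∧
        IsPM (markedEnds ends Xᶜ ⟨u₂, hu₂⟩ ⟨v₂, hv₂⟩) (restrM ends Xᶜ M True)) :=
  stmt12_general ends hloop X f f' hC hXeven u₁ u₂ v₁ v₂ hu₁ hu₂ hv₁ hv₂ hf hf' M hM
end
end

section
/- Let G be a 2-connected graph of even order with an even 2-cut C and marked C-components G₁, G₂. Then G is matching covered if and only if both G₁ and G₂ are matching covered. -/
/-!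
Every edge meets `X` in an even number of ends except `f` and `f'`, so as `|X|` is even, every
perfect matching of `G` contains both or neither of them. At a vertex of `X` the edges of `G`
correspond bijectively to those of `G₁`, the marker standing for `f` at `u₁` and for `f'` at `v₁`
(this needs `u₁ ≠ v₁`); hence the perfect matchings of `G` are exactly the gluings of perfect
matchings of `G₁` and `G₂` that agree on the marker. 2-connectivity gives `u₁ ≠ v₁`, `u₂ ≠ v₂`
and edges inside the shores at `u₁` and at `u₂`, so a matching covered `Gᵢ` has perfect matchings
both containing and avoiding its marker, and any perfect matching of one side can be completed by
one of the other.
-/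

noncomputable section
open scoped Classical

theorem Set.BijOn.existsUnique_iff {α β : Type*} {φ : α → β} {s : Set α} {t : Set β}
    (h : Set.BijOn φ s t) {P : β → Prop} :
    (∃! b, P b ∧ b ∈ t) ↔ ∃! a, P (φ a) ∧ a ∈ s := by
  constructor
  · rintro ⟨b, ⟨hPb, hb⟩, huniq⟩
    obtain ⟨a, ha, rfl⟩ := h.surjOn hb
    exact ⟨a, ⟨hPb, ha⟩, fun a' ⟨hPa', ha'⟩ => h.injOn ha' ha (huniq _ ⟨hPa', h.mapsTo ha'⟩)⟩
  · rintro ⟨a, ⟨hPa, ha⟩, huniq⟩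
    refine ⟨φ a, ⟨hPa, h.mapsTo ha⟩, fun b ⟨hPb, hb⟩ => ?_⟩
    obtain ⟨a', ha', rfl⟩ := h.surjOn hb
    rw [huniq a' ⟨hPb, ha'⟩]

theorem SimpleGraph.Reachable.mem_of_forall_adj {V : Type*} {G : SimpleGraph V} {S : Set V}
    (hS : ∀ x z, x ∈ S → G.Adj x z → z ∈ S) {x y : V} (h : G.Reachable x y) (hx : x ∈ S) :
    y ∈ S := by
  rw [SimpleGraph.reachable_iff_reflTransGen] at h
  induction h with
  | refl => exact hx
  | tail _ hadj ih => exact hS _ _ ih hadj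

theorem TwoConnected.reachable_induce {V E : Type} {ends : E → Sym2 V}
    (h2c : TwoConnected ends) {v x y : V} (hx : x ≠ v) (hy : y ≠ v) :
    ((toSimple ends).induce {w | w ≠ v}).Reachable ⟨x, hx⟩ ⟨y, hy⟩ :=
  (h2c.2 v ⟨x, hx⟩).preconnected _ _

section PerfectMatching

variable {V E : Type} {ends : E → Sym2 V}

theorem mem_cut_iff {Y : Set V} {e : E} {x z : V} (he : ends e = s(x, z)) :
    e ∈ Cut ends Y ↔ (x ∈ Y ↔ z ∉ Y) := by
  constructor
  · rintro ⟨u, hu, w, hw, he'⟩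
    rcases Sym2.eq_iff.mp (he.symm.trans he') with ⟨rfl, rfl⟩ | ⟨rfl, rfl⟩ <;> tauto
  · intro h
    by_cases hx : x ∈ Y
    · exact ⟨x, hx, z, h.mp hx, he⟩
    · exact ⟨z, not_not.mp (mt h.mpr hx), x, hx, he.trans Sym2.eq_swap⟩

theorem IsPM.eq_of_mem_ends {M : Set E} (hM : IsPM ends M)
    {v : V} {e e' : E} (he : e ∈ M) (he' : e' ∈ M) (hv : v ∈ ends e) (hv' : v ∈ ends e') :
    e = e' :=
  (hM v).unique ⟨he, hv⟩ ⟨he', hv'⟩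

theorem IsPM.card_filter_mem_ends {M : Set E} [Fintype M] (hM : IsPM ends M) (v : V) :
    (M.toFinset.filter (v ∈ ends ·)).card = 1 := by
  obtain ⟨e, he, huniq⟩ := hM v
  refine Finset.card_eq_one.mpr ⟨e, Finset.ext fun e' => ?_⟩
  simp only [Finset.mem_filter, Set.mem_toFinset, Finset.mem_singleton]
  exact ⟨huniq e', fun h => h ▸ he⟩

variable [Fintype V]

theorem odd_card_filter_mem_ends_iff {e : E} (hloop : ¬ (ends e).IsDiag) (Y : Set V) :
    Odd (Y.toFinset.filter (· ∈ ends e)).card ↔ e ∈ Cut ends Y := by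
  induction he : ends e using Sym2.ind with
  | _ x z =>
  have hxz : x ≠ z := by rwa [he, Sym2.mk_isDiag_iff] at hloop
  have : Y.toFinset.filter (· ∈ s(x, z)) = ({x, z} : Finset V).filter (· ∈ Y) := by
    ext v
    simp [and_comm]
  rw [this, mem_cut_iff he, Finset.filter_insert, Finset.filter_singleton]
  by_cases hx : x ∈ Y <;> by_cases hz : z ∈ Y <;> simp [hx, hz, hxz]

theorem IsPM.even_ncard_iff [Fintype E] (hloop : ∀ e, ¬ (ends e).IsDiag) {M : Set E}
    (hM : IsPM ends M) (Y : Set V) : Even Y.ncard ↔ Even (M ∩ Cut ends Y).ncard := by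
  have hcount := Finset.sum_card_bipartiteAbove_eq_sum_card_bipartiteBelow
    (s := Y.toFinset) (t := M.toFinset) (r := fun v e => v ∈ ends e)
  simp only [Finset.bipartiteAbove, Finset.bipartiteBelow,
    hM.card_filter_mem_ends, Finset.sum_const, smul_eq_mul, mul_one] at hcount
  rw [Set.ncard_eq_toFinset_card', hcount, Finset.even_sum_iff_even_card_odd,
    Set.ncard_eq_toFinset_card', Set.toFinset_inter]
  simp only [odd_card_filter_mem_ends_iff (hloop _)]
  congr! 2
  ext
  simp

theorem IsPM.mem_iff_mem_of_cut_eq_pair [Fintype E] (hloop : ∀ e, ¬ (ends e).IsDiag)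
    {M : Set E} (hM : IsPM ends M) {Y : Set V} (hY : Even Y.ncard) {f f' : E}
    (hC : Cut ends Y = {f, f'}) :
    f ∈ M ↔ f' ∈ M := by
  have hcut := (hM.even_ncard_iff hloop Y).mp hY
  rw [hC] at hcut
  by_cases hf : f ∈ M <;> by_cases hf' : f' ∈ M <;>
    simp_all [Set.inter_insert_of_mem, Set.inter_insert_of_notMem]

end PerfectMatching

section Marked

variable {V E : Type} {ends : E → Sym2 V}

theorem restrVert_of_mem {Y : Set V} (a : Y) {v : V} (hv : v ∈ Y) :
    restrVert Y a v = ⟨v, hv⟩ :=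
  dif_pos hv

theorem restrVert_of_notMem {Y : Set V} (a : Y) {v : V} (hv : v ∉ Y) : restrVert Y a v = a :=
  dif_neg hv

theorem mem_markedEnds_inl {Y : Set V} (a b : Y) (e : {e : E // ∀ v ∈ ends e, v ∈ Y}) (x : Y) :
    x ∈ markedEnds ends Y a b (.inl e) ↔ (x : V) ∈ ends e.val := by
  simp only [markedEnds, Sym2.mem_map]
  constructor
  · rintro ⟨w, hw, rfl⟩
    rwa [restrVert_of_mem a (e.prop w hw)]
  · exact fun hx => ⟨x, hx, restrVert_of_mem a x.prop⟩

theorem mem_markedEnds_inr {Y : Set V} (a b : Y) (x : Y) :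
    x ∈ markedEnds ends Y a b (.inr ()) ↔ x = a ∨ x = b :=
  Sym2.mem_iff

theorem forall_mem_ends_of_ends_eq {Y : Set V} {e : E} {x z : V} (he : ends e = s(x, z))
    (hx : x ∈ Y) (hz : z ∈ Y) : ∀ v ∈ ends e, v ∈ Y := by
  intro v hv
  rw [he, Sym2.mem_iff] at hv
  rcases hv with rfl | rfl <;> assumption

theorem adj_markedEnds_of_adj {Y : Set V} (a b : Y) {x z : V} (hx : x ∈ Y) (hz : z ∈ Y)
    (hadj : (toSimple ends).Adj x z) : (toSimple (markedEnds ends Y a b)).Adj ⟨x, hx⟩ ⟨z, hz⟩ := by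
  obtain ⟨hne, e, he⟩ := hadj
  refine ⟨fun h => hne (congrArg Subtype.val h), .inl ⟨e, forall_mem_ends_of_ends_eq he hx hz⟩, ?_⟩
  simp only [markedEnds, he, Sym2.map_mk, restrVert_of_mem a hx, restrVert_of_mem a hz]

theorem not_forall_mem_ends_compl_of_forall_mem_ends {Y : Set V} {e : E}
    (he : ∀ v ∈ ends e, v ∈ Y) : ¬ ∀ v ∈ ends e, v ∈ Yᶜ :=
  fun he' => he' _ (Sym2.out_fst_mem _) (he _ (Sym2.out_fst_mem _))

/-- An edge of the marked component at the vertex `v`, read back as an edge of the whole graph: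
the marker edge stands for `f` at `v = p` and for `f'` otherwise. -/
def liftMarkedEdge {Y : Set V} (f f' : E) (p v : V) :
    {e : E // ∀ w ∈ ends e, w ∈ Y} ⊕ Unit → E
  | .inl e => e.val
  | .inr _ => if v = p then f else f'

def glueMatching {Y : Set V} (M₁ : Set ({e : E // ∀ v ∈ ends e, v ∈ Y} ⊕ Unit))
    (M₂ : Set ({e : E // ∀ v ∈ ends e, v ∈ Yᶜ} ⊕ Unit)) : Set E :=
  {e | if he : ∀ v ∈ ends e, v ∈ Y then .inl ⟨e, he⟩ ∈ M₁
    else if he' : ∀ v ∈ ends e, v ∈ Yᶜ then .inl ⟨e, he'⟩ ∈ M₂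
    else .inr () ∈ M₁}

section Glue

variable {Y : Set V} {M₁ : Set ({e : E // ∀ v ∈ ends e, v ∈ Y} ⊕ Unit)}
  {M₂ : Set ({e : E // ∀ v ∈ ends e, v ∈ Yᶜ} ⊕ Unit)} {e : E}

theorem mem_glueMatching_of_forall_mem (he : ∀ v ∈ ends e, v ∈ Y) :
    e ∈ glueMatching M₁ M₂ ↔ .inl ⟨e, he⟩ ∈ M₁ :=
  iff_of_eq (dif_pos he)

theorem mem_glueMatching_of_forall_mem_compl (he : ∀ v ∈ ends e, v ∈ Yᶜ) :
    e ∈ glueMatching M₁ M₂ ↔ .inl ⟨e, he⟩ ∈ M₂ := by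
  have hY : ¬ ∀ v ∈ ends e, v ∈ Y := fun hY =>
    not_forall_mem_ends_compl_of_forall_mem_ends hY he
  exact iff_of_eq ((dif_neg hY).trans (dif_pos he))

theorem mem_glueMatching_of_not_forall_mem (he : ¬ ∀ v ∈ ends e, v ∈ Y)
    (he' : ¬ ∀ v ∈ ends e, v ∈ Yᶜ) : e ∈ glueMatching M₁ M₂ ↔ .inr () ∈ M₁ :=
  iff_of_eq ((dif_neg he).trans (dif_neg he'))

end Glue

end Marked

structure TwoCut {V E : Type} (ends : E → Sym2 V) (Y : Set V) (f f' : E) (p p' q q' : V) :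
    Prop where
  cut_eq : Cut ends Y = {f, f'}
  p_mem : p ∈ Y
  p'_notMem : p' ∉ Y
  q_mem : q ∈ Y
  q'_notMem : q' ∉ Y
  ends_f : ends f = s(p, p')
  ends_f' : ends f' = s(q, q')

namespace TwoCut

variable {V E : Type} {ends : E → Sym2 V} {Y : Set V} {f f' : E} {p p' q q' : V}

theorem compl (h : TwoCut ends Y f f' p p' q q') : TwoCut ends Yᶜ f f' p' p q' q where
  cut_eq := by
    rw [← h.cut_eq]
    ext e
    constructor <;>
    · rintro ⟨u, hu, w, hw, he⟩
      exact ⟨w, by simpa using hw, u, by simpa using hu, he.trans Sym2.eq_swap⟩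
  p_mem := h.p'_notMem
  p'_notMem := not_not.mpr h.p_mem
  q_mem := h.q'_notMem
  q'_notMem := not_not.mpr h.q_mem
  ends_f := h.ends_f.trans Sym2.eq_swap
  ends_f' := h.ends_f'.trans Sym2.eq_swap

theorem eq_or_eq_of_ends_eq (h : TwoCut ends Y f f' p p' q q') {e : E} {x z : V}
    (he : ends e = s(x, z)) (hx : x ∈ Y) (hz : z ∉ Y) :
    (e = f ∧ x = p ∧ z = p') ∨ (e = f' ∧ x = q ∧ z = q') := by
  have hcut : e ∈ Cut ends Y := ⟨x, hx, z, hz, he⟩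
  rw [h.cut_eq] at hcut
  rcases hcut with rfl | rfl
  · rcases Sym2.eq_iff.mp (he.symm.trans h.ends_f) with ⟨rfl, rfl⟩ | ⟨rfl, rfl⟩
    · exact .inl ⟨rfl, rfl, rfl⟩
    · exact absurd hx h.p'_notMem
  · rcases Sym2.eq_iff.mp (he.symm.trans h.ends_f') with ⟨rfl, rfl⟩ | ⟨rfl, rfl⟩
    · exact .inr ⟨rfl, rfl, rfl⟩
    · exact absurd hx h.q'_notMem

theorem eq_or_eq_of_adj (h : TwoCut ends Y f f' p p' q q') {x z : V}
    (hadj : (toSimple ends).Adj x z) (hx : x ∈ Y) (hz : z ∉ Y) : x = p ∨ x = q := by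
  obtain ⟨-, e, he⟩ := hadj
  rcases h.eq_or_eq_of_ends_eq he hx hz with ⟨-, rfl, -⟩ | ⟨-, rfl, -⟩ <;> simp

theorem eq_or_eq_of_mem_ends (h : TwoCut ends Y f f' p p' q q') {e : E} {v : V}
    (hv : v ∈ ends e) (hvY : v ∈ Y) (he : ¬ ∀ w ∈ ends e, w ∈ Y) :
    (e = f ∧ v = p) ∨ (e = f' ∧ v = q) := by
  obtain ⟨z, hz⟩ := Sym2.mem_iff_exists.mp hv
  have hzY : z ∉ Y := fun hzY => he (forall_mem_ends_of_ends_eq hz hvY hzY)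
  rcases h.eq_or_eq_of_ends_eq hz hvY hzY with ⟨rfl, rfl, -⟩ | ⟨rfl, rfl, -⟩ <;> simp

theorem not_forall_mem_ends_f (h : TwoCut ends Y f f' p p' q q') : ¬ ∀ v ∈ ends f, v ∈ Y :=
  fun hf => h.p'_notMem (hf p' (by rw [h.ends_f]; exact Sym2.mem_mk_right _ _))

theorem not_forall_mem_ends_f' (h : TwoCut ends Y f f' p p' q q') : ¬ ∀ v ∈ ends f', v ∈ Y :=
  fun hf => h.q'_notMem (hf q' (by rw [h.ends_f']; exact Sym2.mem_mk_right _ _))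

theorem not_forall_mem_ends_ite (h : TwoCut ends Y f f' p p' q q') (v : V) :
    ¬ ∀ w ∈ ends (if v = p then f else f'), w ∈ Y := by
  split_ifs
  exacts [h.not_forall_mem_ends_f, h.not_forall_mem_ends_f']

theorem bijOn_liftMarkedEdge (h : TwoCut ends Y f f' p p' q q') (hpq : p ≠ q) {v : V}
    (hv : v ∈ Y) :
    Set.BijOn (liftMarkedEdge f f' p v)
      {ε | ⟨v, hv⟩ ∈ markedEnds ends Y ⟨p, h.p_mem⟩ ⟨q, h.q_mem⟩ ε} {e | v ∈ ends e} := by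
  refine ⟨?_, ?_, ?_⟩
  · rintro (e | ⟨⟩) hε
    · exact (mem_markedEnds_inl _ _ e _).mp hε
    · rcases (mem_markedEnds_inr _ _ _).mp hε with hvp | hvq
      · cases congrArg Subtype.val hvp
        simp [liftMarkedEdge, h.ends_f]
      · cases congrArg Subtype.val hvq
        simp [liftMarkedEdge, hpq.symm, h.ends_f']
  · rintro (e | ⟨⟩) - (e' | ⟨⟩) - hee'
    · exact congrArg Sum.inl (Subtype.ext hee')
    · simp only [liftMarkedEdge] at hee'
      exact absurd (hee' ▸ e.prop) (h.not_forall_mem_ends_ite v)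
    · simp only [liftMarkedEdge] at hee'
      exact absurd (hee' ▸ e'.prop) (h.not_forall_mem_ends_ite v)
    · rfl
  · intro e (he : v ∈ ends e)
    by_cases hinner : ∀ w ∈ ends e, w ∈ Y
    · exact ⟨.inl ⟨e, hinner⟩, (mem_markedEnds_inl _ _ _ _).mpr he, rfl⟩
    rcases h.eq_or_eq_of_mem_ends he hv hinner with ⟨rfl, rfl⟩ | ⟨rfl, rfl⟩
    · exact ⟨.inr (), (mem_markedEnds_inr _ _ _).mpr (.inl rfl), by simp [liftMarkedEdge]⟩
    · exact ⟨.inr (), (mem_markedEnds_inr _ _ _).mpr (.inr rfl),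
        by simp [liftMarkedEdge, hpq.symm]⟩

theorem existsUnique_iff_marked (h : TwoCut ends Y f f' p p' q q') (hpq : p ≠ q) {N : Set E}
    {M : Set ({e : E // ∀ w ∈ ends e, w ∈ Y} ⊕ Unit)}
    (hinner : ∀ e (he : ∀ w ∈ ends e, w ∈ Y), e ∈ N ↔ .inl ⟨e, he⟩ ∈ M)
    (hf : f ∈ N ↔ .inr () ∈ M) (hf' : f' ∈ N ↔ .inr () ∈ M) {v : V} (hv : v ∈ Y) :
    (∃! e, e ∈ N ∧ v ∈ ends e) ↔
      ∃! ε, ε ∈ M ∧ ⟨v, hv⟩ ∈ markedEnds ends Y ⟨p, h.p_mem⟩ ⟨q, h.q_mem⟩ ε := by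
  refine ((h.bijOn_liftMarkedEdge hpq hv).existsUnique_iff (P := (· ∈ N))).trans
    (existsUnique_congr fun ε => and_congr_left' ?_)
  rcases ε with e | ⟨⟩
  · exact hinner e.val e.prop
  · unfold liftMarkedEdge
    split_ifs
    exacts [hf, hf']

theorem isPM_marked (h : TwoCut ends Y f f' p p' q q') (hpq : p ≠ q) {M : Set E}
    (hM : IsPM ends M) (hff' : f ∈ M ↔ f' ∈ M) :
    IsPM (markedEnds ends Y ⟨p, h.p_mem⟩ ⟨q, h.q_mem⟩)
      {ε | ε.elim (fun e => e.val ∈ M) fun _ => f ∈ M} := fun ⟨v, hv⟩ =>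
  (h.existsUnique_iff_marked hpq (fun _ _ => Iff.rfl) Iff.rfl hff'.symm hv).mp (hM v)

theorem isPM_glueMatching (h : TwoCut ends Y f f' p p' q q') (hpq : p ≠ q) (hpq' : p' ≠ q')
    {M₁ : Set ({e : E // ∀ v ∈ ends e, v ∈ Y} ⊕ Unit)}
    {M₂ : Set ({e : E // ∀ v ∈ ends e, v ∈ Yᶜ} ⊕ Unit)}
    (hM₁ : IsPM (markedEnds ends Y ⟨p, h.p_mem⟩ ⟨q, h.q_mem⟩) M₁)
    (hM₂ : IsPM (markedEnds ends Yᶜ ⟨p', h.p'_notMem⟩ ⟨q', h.q'_notMem⟩) M₂)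
    (hmarker : .inr () ∈ M₁ ↔ .inr () ∈ M₂) : IsPM ends (glueMatching M₁ M₂) := by
  have hf := mem_glueMatching_of_not_forall_mem (M₁ := M₁) (M₂ := M₂)
    h.not_forall_mem_ends_f h.compl.not_forall_mem_ends_f
  have hf' := mem_glueMatching_of_not_forall_mem (M₁ := M₁) (M₂ := M₂)
    h.not_forall_mem_ends_f' h.compl.not_forall_mem_ends_f'
  intro v
  by_cases hv : v ∈ Y
  · exact (h.existsUnique_iff_marked hpq (fun _ => mem_glueMatching_of_forall_mem) hf hf'
      hv).mpr (hM₁ ⟨v, hv⟩)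
  · exact (h.compl.existsUnique_iff_marked hpq' (fun _ => mem_glueMatching_of_forall_mem_compl)
      (hf.trans hmarker) (hf'.trans hmarker) hv).mpr (hM₂ ⟨v, hv⟩)

theorem reachable_restrVert_of_adj (h : TwoCut ends Y f f' p p' q q') {x z : V}
    (hadj : (toSimple ends).Adj x z) :
    (toSimple (markedEnds ends Y ⟨p, h.p_mem⟩ ⟨q, h.q_mem⟩)).Reachable
      (restrVert Y ⟨p, h.p_mem⟩ x) (restrVert Y ⟨p, h.p_mem⟩ z) := by
  set G₁ := toSimple (markedEnds ends Y ⟨p, h.p_mem⟩ ⟨q, h.q_mem⟩)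
  have hpq : G₁.Reachable ⟨p, h.p_mem⟩ ⟨q, h.q_mem⟩ := by
    by_cases hpq : (⟨p, h.p_mem⟩ : Y) = ⟨q, h.q_mem⟩
    · rw [hpq]
    · exact SimpleGraph.Adj.reachable ⟨hpq, .inr (), rfl⟩
  have hcross : ∀ {x z : V}, (toSimple ends).Adj x z → (hx : x ∈ Y) → z ∉ Y →
      G₁.Reachable ⟨x, hx⟩ ⟨p, h.p_mem⟩ := by
    intro x z hadj hx hz
    rcases h.eq_or_eq_of_adj hadj hx hz with rfl | rfl
    exacts [.rfl, hpq.symm]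
  by_cases hx : x ∈ Y <;> by_cases hz : z ∈ Y <;>
    simp only [restrVert_of_mem, restrVert_of_notMem, hx, hz, not_false_eq_true]
  · exact (adj_markedEnds_of_adj _ _ hx hz hadj).reachable
  · exact hcross hadj hx hz
  · exact (hcross hadj.symm hz hx).symm
  · rfl

theorem connected_marked (h : TwoCut ends Y f f' p p' q q') (hconn : (toSimple ends).Connected) :
    (toSimple (markedEnds ends Y ⟨p, h.p_mem⟩ ⟨q, h.q_mem⟩)).Connected := by
  have : Nonempty Y := ⟨⟨p, h.p_mem⟩⟩
  refine ⟨fun a b => ?_⟩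
  -- collapsing `Yᶜ` onto `p` turns walks of the graph into walks of the marked component
  have hab := (SimpleGraph.reachable_iff_reflTransGen _ _).mp (hconn.preconnected a b)
  have := Relation.ReflTransGen.lift' (restrVert Y ⟨p, h.p_mem⟩)
    (fun x z hadj => (SimpleGraph.reachable_iff_reflTransGen _ _).mp
      (h.reachable_restrVert_of_adj hadj)) _ _ hab
  rwa [Function.onFun_apply, restrVert_of_mem _ a.prop, restrVert_of_mem _ b.prop,
    ← SimpleGraph.reachable_iff_reflTransGen] at this

theorem ne_of_twoConnected (h : TwoCut ends Y f f' p p' q q') (h2c : TwoConnected ends)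
    (hY : 1 < Y.ncard) : p ≠ q := by
  rintro rfl
  obtain ⟨x, hxY, hxp⟩ := Set.exists_ne_of_one_lt_ncard hY p
  have hp'p : p' ≠ p := fun hp' => h.p'_notMem (hp' ▸ h.p_mem)
  -- both cut edges end at `p`, so once `p` is removed no edge leaves `Y`
  have hclosed : ∀ w z : ↥{w | w ≠ p}, (w : V) ∈ Y →
      ((toSimple ends).induce {w | w ≠ p}).Adj w z → (z : V) ∈ Y := by
    intro w z hw hadj
    by_contra hz
    rcases h.eq_or_eq_of_adj hadj hw hz with hwp | hwp <;> exact w.prop hwp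
  exact h.p'_notMem ((h2c.reachable_induce hxp hp'p).mem_of_forall_adj
    (S := {w : ↥{w | w ≠ p} | (w : V) ∈ Y}) hclosed hxY)

theorem exists_inner_edge_at_p (h : TwoCut ends Y f f' p p' q q') (h2c : TwoConnected ends)
    (hY : 1 < Y.ncard) : ∃ e : {e : E // ∀ w ∈ ends e, w ∈ Y}, p ∈ ends e.val := by
  have hpq := h.ne_of_twoConnected h2c hY
  by_contra! hno
  obtain ⟨x, hxY, hxp⟩ := Set.exists_ne_of_one_lt_ncard hY p
  have hpp' : p ≠ p' := fun hp => h.p'_notMem (hp ▸ h.p_mem)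
  have hxp' : x ≠ p' := fun hx => h.p'_notMem (hx ▸ hxY)
  -- the only edge from `p` out of `Y` is `f`, so without an edge inside `Y` at `p`,
  -- removing `p'` isolates `p`
  have hclosed : ∀ w z : ↥{w | w ≠ p'}, (w : V) = p →
      ((toSimple ends).induce {w | w ≠ p'}).Adj w z → (z : V) = p := by
    intro w z hw hadj
    obtain ⟨-, e, he⟩ : (toSimple ends).Adj w z := hadj
    rw [hw] at he
    by_cases hz : (z : V) ∈ Y
    · exact absurd (he ▸ Sym2.mem_mk_left _ _)
        (hno ⟨e, forall_mem_ends_of_ends_eq he h.p_mem hz⟩)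
    · rcases h.eq_or_eq_of_ends_eq he h.p_mem hz with ⟨-, -, hzp'⟩ | ⟨-, hpq', -⟩
      exacts [absurd hzp' z.prop, absurd hpq' hpq]
  exact hxp ((h2c.reachable_induce hpp' hxp').mem_of_forall_adj
    (S := {w : ↥{w | w ≠ p'} | (w : V) = p}) hclosed rfl)

theorem one_lt_ncard [Finite V] (h : TwoCut ends Y f f' p p' q q') (hY : Even Y.ncard) :
    1 < Y.ncard := by
  have := (Set.ncard_pos Y.toFinite).mpr ⟨p, h.p_mem⟩
  obtain ⟨k, hk⟩ := hY
  omega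

theorem exists_isPM_marked_marker_iff (h : TwoCut ends Y f f' p p' q q')
    (h2c : TwoConnected ends) (hY : 1 < Y.ncard)
    (hcover : ∀ ε, ∃ M, IsPM (markedEnds ends Y ⟨p, h.p_mem⟩ ⟨q, h.q_mem⟩) M ∧ ε ∈ M)
    (P : Prop) :
    ∃ M, IsPM (markedEnds ends Y ⟨p, h.p_mem⟩ ⟨q, h.q_mem⟩) M ∧ (.inr () ∈ M ↔ P) := by
  by_cases hP : P
  · obtain ⟨M, hM, hmarker⟩ := hcover (.inr ())
    exact ⟨M, hM, iff_of_true hmarker hP⟩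
  · obtain ⟨e, hpe⟩ := h.exists_inner_edge_at_p h2c hY
    obtain ⟨M, hM, he⟩ := hcover (.inl e)
    refine ⟨M, hM, iff_of_false (fun hmarker => ?_) hP⟩
    cases hM.eq_of_mem_ends he hmarker ((mem_markedEnds_inl _ _ _ _).mpr hpe)
      ((mem_markedEnds_inr _ _ _).mpr (.inl rfl))

theorem isMC_marked [Fintype V] [Fintype E] (h : TwoCut ends Y f f' p p' q q')
    (hloop : ∀ e, ¬ (ends e).IsDiag) (h2c : TwoConnected ends) (hY : Even Y.ncard)
    (hmc : IsMC ends) : IsMC (markedEnds ends Y ⟨p, h.p_mem⟩ ⟨q, h.q_mem⟩) := by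
  have hY1 := h.one_lt_ncard hY
  have hpq := h.ne_of_twoConnected h2c hY1
  have hrestrict {M : Set E} (hM : IsPM ends M) := h.isPM_marked hpq hM
    (hM.mem_iff_mem_of_cut_eq_pair hloop hY h.cut_eq)
  refine ⟨h.connected_marked hmc.1, by rwa [Nat.card_coe_set_eq], ?_⟩
  rintro (e | ⟨⟩)
  · obtain ⟨M, hM, he⟩ := hmc.2.2 e.val
    exact ⟨_, hrestrict hM, he⟩
  · obtain ⟨M, hM, hf⟩ := hmc.2.2 f
    exact ⟨_, hrestrict hM, hf⟩

theorem isMC_of_isMC_marked [Finite V] (h : TwoCut ends Y f f' p p' q q')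
    (h2c : TwoConnected ends) (hY : 1 < Y.ncard) (hYc : 1 < Yᶜ.ncard)
    (hmc : IsMC (markedEnds ends Y ⟨p, h.p_mem⟩ ⟨q, h.q_mem⟩))
    (hmc' : IsMC (markedEnds ends Yᶜ ⟨p', h.p'_notMem⟩ ⟨q', h.q'_notMem⟩)) : IsMC ends := by
  have hpp' : p ≠ p' := fun hp => h.p'_notMem (hp ▸ h.p_mem)
  refine ⟨h2c.1, Finite.one_lt_card_iff_nontrivial.mpr ⟨p, p', hpp'⟩, fun e => ?_⟩
  suffices ∃ M₁ M₂, IsPM (markedEnds ends Y ⟨p, h.p_mem⟩ ⟨q, h.q_mem⟩) M₁ ∧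
      IsPM (markedEnds ends Yᶜ ⟨p', h.p'_notMem⟩ ⟨q', h.q'_notMem⟩) M₂ ∧
      (.inr () ∈ M₁ ↔ .inr () ∈ M₂) ∧ e ∈ glueMatching M₁ M₂ by
    obtain ⟨M₁, M₂, hM₁, hM₂, hmarker, he⟩ := this
    exact ⟨_, h.isPM_glueMatching (h.ne_of_twoConnected h2c hY)
      (h.compl.ne_of_twoConnected h2c hYc) hM₁ hM₂ hmarker, he⟩
  by_cases he : ∀ v ∈ ends e, v ∈ Y
  · obtain ⟨M₁, hM₁, he₁⟩ := hmc.2.2 (.inl ⟨e, he⟩)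
    obtain ⟨M₂, hM₂, hmarker⟩ :=
      h.compl.exists_isPM_marked_marker_iff h2c hYc hmc'.2.2 (.inr () ∈ M₁)
    exact ⟨M₁, M₂, hM₁, hM₂, hmarker.symm, (mem_glueMatching_of_forall_mem he).mpr he₁⟩
  by_cases he' : ∀ v ∈ ends e, v ∈ Yᶜ
  · obtain ⟨M₂, hM₂, he₂⟩ := hmc'.2.2 (.inl ⟨e, he'⟩)
    obtain ⟨M₁, hM₁, hmarker⟩ :=
      h.exists_isPM_marked_marker_iff h2c hY hmc.2.2 (.inr () ∈ M₂)
    exact ⟨M₁, M₂, hM₁, hM₂, hmarker, (mem_glueMatching_of_forall_mem_compl he').mpr he₂⟩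
  · obtain ⟨M₁, hM₁, hmarker₁⟩ := hmc.2.2 (.inr ())
    obtain ⟨M₂, hM₂, hmarker₂⟩ := hmc'.2.2 (.inr ())
    exact ⟨M₁, M₂, hM₁, hM₂, iff_of_true hmarker₁ hmarker₂,
      (mem_glueMatching_of_not_forall_mem he he').mpr hmarker₁⟩

end TwoCut

theorem stmt13_general {V E : Type} [Fintype V] [Fintype E]
    (ends : E → Sym2 V) (hloop : ∀ e, ¬ (ends e).IsDiag)
    (h2c : TwoConnected ends) (heven : Even (Fintype.card V))
    (X : Set V) (f f' : E) (hC : Cut ends X = {f, f'})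
    (hXeven : Even X.ncard)
    (u₁ u₂ v₁ v₂ : V) (hu₁ : u₁ ∈ X) (hu₂ : u₂ ∉ X) (hv₁ : v₁ ∈ X) (hv₂ : v₂ ∉ X)
    (hf : ends f = s(u₁, u₂)) (hf' : ends f' = s(v₁, v₂)) :
    IsMC ends ↔
      (IsMC (markedEnds ends X ⟨u₁, hu₁⟩ ⟨v₁, hv₁⟩) ∧
        IsMC (markedEnds ends Xᶜ ⟨u₂, hu₂⟩ ⟨v₂, hv₂⟩)) := by
  have hX : TwoCut ends X f f' u₁ u₂ v₁ v₂ := ⟨hC, hu₁, hu₂, hv₁, hv₂, hf, hf'⟩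
  have hXc : Even Xᶜ.ncard := by
    rw [← Nat.card_eq_fintype_card, ← Set.ncard_add_ncard_compl X] at heven
    exact (Nat.even_add.mp heven).mp hXeven
  exact ⟨fun hmc => ⟨hX.isMC_marked hloop h2c hXeven hmc, hX.compl.isMC_marked hloop h2c hXc hmc⟩,
    fun ⟨hmc, hmc'⟩ => hX.isMC_of_isMC_marked h2c (hX.one_lt_ncard hXeven)
      (hX.compl.one_lt_ncard hXc) hmc hmc'⟩

/-- Let `G` be a 2-connected loopless multigraph of even order with an even
2-cut `C = {f, f'} = ∂(X)` and marked `C`-components `G₁`, `G₂`. Then `G` is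
matching covered if and only if both `G₁` and `G₂` are matching covered. -/
theorem stmt13 {V E : Type} [Fintype V] [Fintype E]
    (ends : E → Sym2 V) (hloop : ∀ e, ¬ (ends e).IsDiag)
    (h2c : TwoConnected ends) (heven : Even (Fintype.card V))
    (X : Set V) (f f' : E) (hff : f ≠ f') (hC : Cut ends X = {f, f'})
    (hXeven : Even X.ncard)
    (u₁ u₂ v₁ v₂ : V) (hu₁ : u₁ ∈ X) (hu₂ : u₂ ∉ X) (hv₁ : v₁ ∈ X) (hv₂ : v₂ ∉ X)
    (hf : ends f = s(u₁, u₂)) (hf' : ends f' = s(v₁, v₂)) :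
    IsMC ends ↔
      (IsMC (markedEnds ends X ⟨u₁, hu₁⟩ ⟨v₁, hv₁⟩) ∧
        IsMC (markedEnds ends Xᶜ ⟨u₂, hu₂⟩ ⟨v₂, hv₂⟩)) :=
  stmt13_general ends hloop h2c heven X f f' hC hXeven u₁ u₂ v₁ v₂ hu₁ hu₂ hv₁ hv₂ hf hf'
end
end
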